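/- arXiv:2405.02902 — 7 statements merged into one kernel-verified Lean document; each statement's English description precedes it below -/
import Mathlib

section
/- Let ν_j := μ(u+v, v; m−j). For all m ∈ ℂ, every integer n ≥ 0, and each sign ε ∈ {+1, −1}, one has ξ_{m−1,n−1,ε} = x^{εn}·q^{n(m−n)}·det M, where M is the (n+1)×(n+1) matrix whose first row is (1, x^{ε}, x^{2ε}, …, x^{nε}) and whose row j (for j = 1, …, n) is (ν_j, ν_{j+1}, …, ν_{j+n}); equivalently M_{0,j'} = x^{εj'} and M_{j,j'} = μ(u+v, v; m−j−j') for 1 ≤ j ≤ n, 0 ≤ j' ≤ n. -/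
noncomputable section

open Complex

/-- Jacobi theta function `θ(v;τ) = Σ_{ν∈ℤ+1/2} e^{2πiν(v+1/2)+πiν²τ}`. -/
def jtheta (τ v : ℂ) : ℂ :=
  ∑' n : ℤ, Complex.exp (2 * (Real.pi : ℂ) * Complex.I * ((n : ℂ) + 1/2) * (v + 1/2) +
    (Real.pi : ℂ) * Complex.I * ((n : ℂ) + 1/2) ^ 2 * τ)

/-- The `j`-th factor (j = 0,1,2,… corresponding to j+1 = 1,2,…) of the infinite product
in the generalized μ-function. -/
def muFactor (τ u α : ℂ) (n : ℤ) (j : ℕ) : ℂ :=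
  (1 - Complex.exp (2 * (Real.pi : ℂ) * Complex.I * u +
      2 * (Real.pi : ℂ) * Complex.I * ((n : ℂ) + ((j : ℂ) + 1)) * τ)) /
  (1 - Complex.exp (2 * (Real.pi : ℂ) * Complex.I * u +
      2 * (Real.pi : ℂ) * Complex.I * ((n : ℂ) - α + ((j : ℂ) + 1)) * τ))

/-- The `n`-th summand of the series defining the generalized μ-function. -/
def muTerm (τ u v α : ℂ) (n : ℤ) : ℂ :=
  (-1 : ℂ) ^ n * Complex.exp (2 * (Real.pi : ℂ) * Complex.I * ((n : ℂ) + 1/2) * v) *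
    Complex.exp ((Real.pi : ℂ) * Complex.I * (n : ℂ) * ((n : ℂ) + 1) * τ) *
    ∏' j : ℕ, muFactor τ u α n j

/-- The generalized μ-function `μ(u,v;α)` of Shibukawa–Tsuchimi. -/
def mu (τ u v α : ℂ) : ℂ :=
  Complex.exp ((Real.pi : ℂ) * Complex.I * α * (u - v)) / jtheta τ v *
    ∑' n : ℤ, muTerm τ u v α n

/-- The `q`-power `q^s := e^{πisτ}` (where `q = e^{πiτ}`). -/
def qp (τ s : ℂ) : ℂ := Complex.exp ((Real.pi : ℂ) * Complex.I * s * τ)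

/-- `ξ_{m,n,k} := det[ μ(u+v+kτ, v; m−j−j') ]_{j,j'=0}^{n}`, an `(n+1)×(n+1)` determinant,
with the convention `ξ_{m,n,k} = 1` for `n < 0`. -/
def xi (τ u v m : ℂ) (n : ℤ) (k : ℂ) : ℂ :=
  if 0 ≤ n then
    Matrix.det (Matrix.of fun j j' : Fin (n.toNat + 1) =>
      mu τ (u + v + k * τ) v (m - ((j : ℕ) : ℂ) - ((j' : ℕ) : ℂ)))
  else 1

/-- Genericity of `u, v, τ` (relative to the parameters `m` and `k`): `θ(v;τ) ≠ 0`,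
every series and infinite product defining the occurring μ-values converges,
and no denominator factor `1 − e^{2πi(u+v+k'τ)+2πi(l−α+j)τ}` vanishes. -/
def MuGeneric (τ u v m k : ℂ) : Prop :=
  jtheta τ v ≠ 0 ∧
  (∀ a b : ℤ, Summable fun n : ℤ =>
    muTerm τ (u + v + (k + (b : ℂ)) * τ) v (m - (a : ℂ)) n) ∧
  (∀ a b l : ℤ, Multipliable fun j : ℕ =>
    muFactor τ (u + v + (k + (b : ℂ)) * τ) (m - (a : ℂ)) l j) ∧
  (∀ a b l : ℤ, ∀ j : ℕ,
    1 - Complex.exp (2 * (Real.pi : ℂ) * Complex.I * (u + v + (k + (b : ℂ)) * τ) +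
      2 * (Real.pi : ℂ) * Complex.I * ((l : ℂ) - (m - (a : ℂ)) + ((j : ℂ) + 1)) * τ) ≠ 0)

/-!
With `X = e^{πi(W - v)}`, shifting the first argument of `μ` by `∓τ` gives the two-term relations
`μ(W - τ; α) = X⁻¹ q^α (μ(W; α - 1) - X⁻¹ μ(W; α))` and
`μ(W; α) = Y q^α (μ(W - τ; α - 1) - Y μ(W - τ; α))` with `Y = X q⁻¹`.
They hold termwise in the defining series up to an index shift, because the infinite products
telescope when `α` (or `α` together with the summation index) moves by one. Taking `W = u + v`,
resp. `W = u + v + τ`, every entry of `ξ_{m-1,n-1,ε}` becomes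
`x^ε q^{m-1-j-j'} (ν_{j+j'+2} - x^ε ν_{j+j'+1})`. The powers of `q` leave the determinant as
`q^{n(m-n)}`, and what remains is the bordered determinant `det M` after subtracting `x^ε` times
each column from the next one, which clears the first row of `M`.
-/

open Filter Topology

theorem tprod_eq_mul_tprod_of_telescoping {M : Type*} [CommMonoid M] [TopologicalSpace M]
    [ContinuousMul M] [T2Space M] {f g h : ℕ → M} (hf : Multipliable f) (hg : Multipliable g)
    (hfg : ∀ j, f j * h (j + 1) = g j * h j) (hh : Tendsto h atTop (𝓝 1)) :
    ∏' j, f j = h 0 * ∏' j, g j := by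
  have partial_prod : ∀ J, (∏ j ∈ Finset.range J, f j) * h J = h 0 * ∏ j ∈ Finset.range J, g j := by
    intro J
    induction J with
    | zero => simp
    | succ J ih =>
      rw [Finset.prod_range_succ, Finset.prod_range_succ, mul_assoc, hfg, ← mul_assoc,
        mul_right_comm, ih, mul_assoc]
  have hlim := (hf.hasProd.tendsto_prod_nat.mul hh).congr partial_prod
  rw [mul_one] at hlim
  exact tendsto_nhds_unique hlim (tendsto_const_nhds.mul hg.hasProd.tendsto_prod_nat)

def muExp (τ W s : ℂ) : ℂ :=
  cexp (2 * (Real.pi : ℂ) * I * W + 2 * (Real.pi : ℂ) * I * s * τ)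

theorem muFactor_eq (τ W α : ℂ) (l : ℤ) (j : ℕ) :
    muFactor τ W α l j
      = (1 - muExp τ W (l + (j + 1))) / (1 - muExp τ W (l - α + (j + 1))) := rfl

theorem tendsto_one_sub_muExp (τ W c : ℂ) (hτ : 0 < τ.im) :
    Tendsto (fun j : ℕ => 1 - muExp τ W (c + j)) atTop (𝓝 1) := by
  have hq : ‖cexp (2 * (Real.pi : ℂ) * I * τ)‖ < 1 := by
    rw [Complex.norm_exp, Real.exp_lt_one_iff]
    simpa [Complex.mul_re] using mul_pos Real.two_pi_pos hτ
  have hpow := (tendsto_pow_atTop_nhds_zero_of_norm_lt_one hq).const_mul (muExp τ W c)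
  rw [mul_zero] at hpow
  have hexp : ∀ j : ℕ, muExp τ W c * cexp (2 * (Real.pi : ℂ) * I * τ) ^ j = muExp τ W (c + j) := by
    intro j
    rw [muExp, muExp, ← Complex.exp_nat_mul, ← Complex.exp_add]
    ring_nf
  simpa using (tendsto_const_nhds (x := (1 : ℂ))).sub (hpow.congr hexp)

theorem tprod_muFactor_sub_one (τ W α : ℂ) (l : ℤ) (hτ : 0 < τ.im)
    (h₁ : Multipliable (muFactor τ W (α - 1) l)) (h₀ : Multipliable (muFactor τ W α l))
    (hden : ∀ j : ℕ, 1 - muExp τ W (l - α + (j + 1)) ≠ 0) :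
    ∏' j, muFactor τ W (α - 1) l j = (1 - muExp τ W (l - α + 1)) * ∏' j, muFactor τ W α l j := by
  have hfg : ∀ j : ℕ, muFactor τ W (α - 1) l j * (1 - muExp τ W (l - α + ((j + 1 : ℕ) + 1)))
      = muFactor τ W α l j * (1 - muExp τ W (l - α + (j + 1))) := by
    intro j
    rw [muFactor_eq, muFactor_eq, div_mul_cancel₀ _ (hden j), Nat.cast_succ,
      show (l : ℂ) - (α - 1) + (j + 1) = l - α + (j + 1 + 1) by ring,
      div_mul_cancel₀ _ (by simpa using hden (j + 1))]
  have hh : Tendsto (fun j : ℕ => 1 - muExp τ W (l - α + (j + 1))) atTop (𝓝 1) :=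
    (tendsto_one_sub_muExp τ W (l - α + 1) hτ).congr fun j => by ring_nf
  simpa using tprod_eq_mul_tprod_of_telescoping h₁ h₀ hfg hh

theorem tprod_muFactor_sub_one_sub_one (τ W α : ℂ) (l : ℤ) (hτ : 0 < τ.im)
    (h₁ : Multipliable (muFactor τ W (α - 1) (l - 1))) (h₀ : Multipliable (muFactor τ W α l)) :
    ∏' j, muFactor τ W (α - 1) (l - 1) j = (1 - muExp τ W l) * ∏' j, muFactor τ W α l j := by
  have hfg : ∀ j : ℕ, muFactor τ W (α - 1) (l - 1) j * (1 - muExp τ W (l + (j + 1 : ℕ)))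
      = muFactor τ W α l j * (1 - muExp τ W (l + j)) := by
    intro j
    rw [muFactor_eq, muFactor_eq]
    push_cast
    ring_nf
  simpa using tprod_eq_mul_tprod_of_telescoping h₁ h₀ hfg (tendsto_one_sub_muExp τ W l hτ)

theorem muFactor_sub_tau (τ W α : ℂ) (l : ℤ) :
    muFactor τ (W - τ) α (l + 1) = muFactor τ W α l := by
  ext j
  simp only [muFactor_eq, muExp]
  push_cast
  ring_nf

theorem muTerm_sub_one (τ W v α : ℂ) (n : ℤ) (hτ : 0 < τ.im)
    (h₁ : Multipliable (muFactor τ W (α - 1) n)) (h₀ : Multipliable (muFactor τ W α n))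
    (hden : ∀ j : ℕ, 1 - muExp τ W (n - α + (j + 1)) ≠ 0) :
    muTerm τ W v (α - 1) n = (1 - muExp τ W (n - α + 1)) * muTerm τ W v α n := by
  rw [muTerm, muTerm, tprod_muFactor_sub_one τ W α n hτ h₁ h₀ hden]
  ring

theorem muTerm_sub_tau_succ (τ W v α : ℂ) (n : ℤ) :
    muTerm τ (W - τ) v α (n + 1)
      = -cexp (2 * (Real.pi : ℂ) * I * (v + (n + 1) * τ)) * muTerm τ W v α n := by
  have hexp : cexp (2 * (Real.pi : ℂ) * I * ((n + 1 : ℤ) + 1 / 2) * v)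
        * cexp ((Real.pi : ℂ) * I * (n + 1 : ℤ) * ((n + 1 : ℤ) + 1) * τ)
      = cexp (2 * (Real.pi : ℂ) * I * (v + (n + 1) * τ))
        * (cexp (2 * (Real.pi : ℂ) * I * (n + 1 / 2) * v)
          * cexp ((Real.pi : ℂ) * I * n * (n + 1) * τ)) := by
    simp only [← Complex.exp_add]
    push_cast
    ring_nf
  rw [muTerm, muTerm, muFactor_sub_tau, zpow_add_one₀ (by norm_num)]
  linear_combination -(-1 : ℂ) ^ n * (∏' j, muFactor τ W α n j) * hexp

theorem muTerm_sub_tau_sub_one (τ W v α : ℂ) (n : ℤ) (hτ : 0 < τ.im)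
    (h₁ : Multipliable (muFactor τ W (α - 1) (n - 1))) (h₀ : Multipliable (muFactor τ W α n)) :
    muTerm τ (W - τ) v (α - 1) n = (1 - muExp τ W n) * muTerm τ W v α n := by
  have hshift := muFactor_sub_tau τ W (α - 1) (n - 1)
  rw [sub_add_cancel] at hshift
  rw [muTerm, muTerm, hshift, tprod_muFactor_sub_one_sub_one τ W α n hτ h₁ h₀]
  ring

def MuConvergent (τ W v α : ℂ) : Prop :=
  Summable (muTerm τ W v α) ∧ ∀ l : ℤ, Multipliable (muFactor τ W α l)

def MuDenomNeZero (τ W α : ℂ) : Prop :=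
  ∀ (l : ℤ) (j : ℕ), 1 - muExp τ W (l - α + (j + 1)) ≠ 0

section Series

variable {τ W v α : ℂ}

theorem tsum_muTerm_sub_tau (hτ : 0 < τ.im) (h₀ : MuConvergent τ W v α)
    (h₁ : MuConvergent τ W v (α - 1)) (hden : MuDenomNeZero τ W α) :
    ∑' n, muTerm τ (W - τ) v α n
      = -cexp (2 * (Real.pi : ℂ) * I * (v - W + α * τ))
        * (∑' n, muTerm τ W v α n - ∑' n, muTerm τ W v (α - 1) n) := by
  have hterm : ∀ n : ℤ, muTerm τ (W - τ) v α (n + 1)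
      = -cexp (2 * (Real.pi : ℂ) * I * (v - W + α * τ))
        * (muTerm τ W v α n - muTerm τ W v (α - 1) n) := by
    intro n
    have hexp : cexp (2 * (Real.pi : ℂ) * I * (v + (n + 1) * τ))
        = cexp (2 * (Real.pi : ℂ) * I * (v - W + α * τ)) * muExp τ W (n - α + 1) := by
      rw [muExp, ← Complex.exp_add]
      ring_nf
    rw [muTerm_sub_tau_succ, muTerm_sub_one τ W v α n hτ (h₁.2 n) (h₀.2 n) (hden n), hexp]
    ring
  rw [← (Equiv.addRight (1 : ℤ)).tsum_eq, ← Summable.tsum_sub h₀.1 h₁.1, ← tsum_mul_left]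
  exact tsum_congr hterm

theorem tsum_muTerm_sub_tau_sub_one (hτ : 0 < τ.im) (h₀ : MuConvergent τ W v α)
    (h₁ : MuConvergent τ W v (α - 1)) (hden : MuDenomNeZero τ W α) :
    ∑' n, muTerm τ (W - τ) v (α - 1) n
      = ∑' n, muTerm τ W v α n - cexp (2 * (Real.pi : ℂ) * I * (α - 1) * τ)
        * (∑' n, muTerm τ W v α n - ∑' n, muTerm τ W v (α - 1) n) := by
  have hterm : ∀ n : ℤ, muTerm τ (W - τ) v (α - 1) n
      = muTerm τ W v α n - cexp (2 * (Real.pi : ℂ) * I * (α - 1) * τ)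
        * (muTerm τ W v α n - muTerm τ W v (α - 1) n) := by
    intro n
    have hexp : muExp τ W n = cexp (2 * (Real.pi : ℂ) * I * (α - 1) * τ) * muExp τ W (n - α + 1) := by
      rw [muExp, muExp, ← Complex.exp_add]
      ring_nf
    rw [muTerm_sub_tau_sub_one τ W v α n hτ (h₁.2 (n - 1)) (h₀.2 n),
      muTerm_sub_one τ W v α n hτ (h₁.2 n) (h₀.2 n) (hden n), hexp]
    ring
  rw [tsum_congr hterm, Summable.tsum_sub h₀.1 ((h₀.1.sub h₁.1).mul_left _), tsum_mul_left,
    Summable.tsum_sub h₀.1 h₁.1]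

theorem tsum_muTerm_eq_sub_tau (hτ : 0 < τ.im) (h₀ : MuConvergent τ W v α)
    (h₁ : MuConvergent τ W v (α - 1)) (hden : MuDenomNeZero τ W α) :
    ∑' n, muTerm τ W v α n
      = ∑' n, muTerm τ (W - τ) v (α - 1) n
        - cexp (2 * (Real.pi : ℂ) * I * (W - τ - v)) * ∑' n, muTerm τ (W - τ) v α n := by
  have hexp : cexp (2 * (Real.pi : ℂ) * I * (W - τ - v))
      * cexp (2 * (Real.pi : ℂ) * I * (v - W + α * τ))
      = cexp (2 * (Real.pi : ℂ) * I * (α - 1) * τ) := by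
    rw [← Complex.exp_add]
    ring_nf
  rw [tsum_muTerm_sub_tau hτ h₀ h₁ hden, tsum_muTerm_sub_tau_sub_one hτ h₀ h₁ hden]
  linear_combination (∑' n, muTerm τ W v (α - 1) n - ∑' n, muTerm τ W v α n) * hexp

end Series

section Mu

variable {τ W v α : ℂ}

theorem mu_sub_tau (hτ : 0 < τ.im) (h₀ : MuConvergent τ W v α)
    (h₁ : MuConvergent τ W v (α - 1)) (hden : MuDenomNeZero τ W α) :
    mu τ (W - τ) v α = (cexp ((Real.pi : ℂ) * I * (W - v)))⁻¹ * qp τ α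
      * (mu τ W v (α - 1) - (cexp ((Real.pi : ℂ) * I * (W - v)))⁻¹ * mu τ W v α) := by
  have h₁' : cexp ((Real.pi : ℂ) * I * α * (W - τ - v)) * cexp (2 * (Real.pi : ℂ) * I * (v - W + α * τ))
      = cexp (-((Real.pi : ℂ) * I * (W - v))) * qp τ α * cexp ((Real.pi : ℂ) * I * (α - 1) * (W - v)) := by
    simp only [qp, ← Complex.exp_add]
    congr 1
    ring
  have h₀' : cexp ((Real.pi : ℂ) * I * α * (W - τ - v)) * cexp (2 * (Real.pi : ℂ) * I * (v - W + α * τ))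
      = cexp (-((Real.pi : ℂ) * I * (W - v))) * qp τ α * cexp (-((Real.pi : ℂ) * I * (W - v)))
        * cexp ((Real.pi : ℂ) * I * α * (W - v)) := by
    simp only [qp, ← Complex.exp_add]
    congr 1
    ring
  rw [mu, mu, mu, tsum_muTerm_sub_tau hτ h₀ h₁ hden, ← Complex.exp_neg]
  linear_combination ((∑' n, muTerm τ W v (α - 1) n) / jtheta τ v) * h₁'
    - ((∑' n, muTerm τ W v α n) / jtheta τ v) * h₀'

theorem mu_eq_sub_tau (hτ : 0 < τ.im) (h₀ : MuConvergent τ W v α)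
    (h₁ : MuConvergent τ W v (α - 1)) (hden : MuDenomNeZero τ W α) :
    mu τ W v α = cexp ((Real.pi : ℂ) * I * (W - τ - v)) * qp τ α
      * (mu τ (W - τ) v (α - 1) - cexp ((Real.pi : ℂ) * I * (W - τ - v)) * mu τ (W - τ) v α) := by
  have h₁' : cexp ((Real.pi : ℂ) * I * α * (W - v))
      = cexp ((Real.pi : ℂ) * I * (W - τ - v)) * qp τ α
        * cexp ((Real.pi : ℂ) * I * (α - 1) * (W - τ - v)) := by
    simp only [qp, ← Complex.exp_add]
    congr 1
    ring
  have h₀' : cexp ((Real.pi : ℂ) * I * α * (W - v)) * cexp (2 * (Real.pi : ℂ) * I * (W - τ - v))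
      = cexp ((Real.pi : ℂ) * I * (W - τ - v)) * qp τ α * cexp ((Real.pi : ℂ) * I * (W - τ - v))
        * cexp ((Real.pi : ℂ) * I * α * (W - τ - v)) := by
    simp only [qp, ← Complex.exp_add]
    congr 1
    ring
  rw [mu, mu, mu, tsum_muTerm_eq_sub_tau hτ h₀ h₁ hden]
  linear_combination ((∑' n, muTerm τ (W - τ) v (α - 1) n) / jtheta τ v) * h₁'
    - ((∑' n, muTerm τ (W - τ) v α n) / jtheta τ v) * h₀'

end Mu

namespace MuGeneric

variable {τ u v m : ℂ}

theorem muConvergent (h : MuGeneric τ u v m 0) (a b : ℤ) :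
    MuConvergent τ (u + v + b * τ) v (m - a) := by
  unfold MuConvergent
  simpa only [zero_add] using And.intro (h.2.1 a b) (h.2.2.1 a b)

theorem muDenomNeZero (h : MuGeneric τ u v m 0) (a b : ℤ) :
    MuDenomNeZero τ (u + v + b * τ) (m - a) := by
  unfold MuDenomNeZero muExp
  simpa only [zero_add] using h.2.2.2 a b

end MuGeneric

theorem mu_add_sign_mul_tau {τ u v m : ℂ} (hτ : 0 < τ.im) (hgen : MuGeneric τ u v m 0)
    (a ε : ℤ) (hε : ε = 1 ∨ ε = -1) :
    mu τ (u + v + ε * τ) v (m - a)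
      = cexp ((Real.pi : ℂ) * I * u) ^ ε * qp τ (m - a)
        * (mu τ (u + v) v (m - a - 1) - cexp ((Real.pi : ℂ) * I * u) ^ ε * mu τ (u + v) v (m - a)) := by
  have hpred : ∀ b : ℤ, MuConvergent τ (u + v + b * τ) v (m - a - 1) := fun b => by
    simpa [sub_sub] using hgen.muConvergent (a + 1) b
  rcases hε with rfl | rfl
  · have h := mu_eq_sub_tau hτ (hgen.muConvergent a 1) (hpred 1) (hgen.muDenomNeZero a 1)
    rw [show u + v + ((1 : ℤ) : ℂ) * τ - τ = u + v by push_cast; ring, add_sub_cancel_right] at h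
    simpa only [zpow_one] using h
  · have h := mu_sub_tau hτ (hgen.muConvergent a 0) (hpred 0) (hgen.muDenomNeZero a 0)
    rw [show u + v + ((0 : ℤ) : ℂ) * τ - τ = u + v + ((-1 : ℤ) : ℂ) * τ by push_cast; ring,
      show u + v + ((0 : ℤ) : ℂ) * τ = u + v by push_cast; ring, add_sub_cancel_right] at h
    simpa only [zpow_neg_one] using h

theorem Matrix.det_pow_row_zero_hankel {R : Type*} [CommRing R] (y : R) (g : ℕ → R) (n : ℕ) :
    det (of fun i j : Fin (n + 1) => if (i : ℕ) = 0 then y ^ (j : ℕ) else g (i + j))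
      = det (of fun a b : Fin n => g (a + b + 2) - y * g (a + b + 1)) := by
  set M : Matrix (Fin (n + 1)) (Fin (n + 1)) R :=
    of fun i j => if (i : ℕ) = 0 then y ^ (j : ℕ) else g (i + j)
  -- subtract `y` times each column from the next one, which clears the first row
  set B : Matrix (Fin (n + 1)) (Fin (n + 1)) R :=
    of fun i j => Fin.cases (M i 0) (fun b => M i b.succ - y * M i b.castSucc) j
  have hMB : M.det = B.det :=
    det_eq_of_forall_col_eq_smul_add_pred (fun _ => y) (fun i => by simp [B])
      (fun i b => by simp [B])
  have hrow : ∀ b : Fin n, B 0 b.succ = 0 := fun b => by simp [B, M, pow_succ']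
  rw [hMB, det_succ_row_zero, Fin.sum_univ_succ, Finset.sum_eq_zero fun b _ => by
    rw [hrow, mul_zero, zero_mul], add_zero]
  simp only [Fin.val_zero, pow_zero, Fin.succAbove_zero, one_mul]
  have hB00 : B 0 0 = 1 := by simp [B, M]
  rw [hB00, one_mul]
  congr 1
  ext a b
  simp only [B, M, submatrix_apply, of_apply, Fin.cases_succ, Fin.val_succ, Fin.val_castSucc,
    Nat.add_one_ne_zero, if_false]
  rw [show (a : ℕ) + 1 + (b + 1) = a + b + 2 by omega, show (a : ℕ) + 1 + b = a + b + 1 by omega]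

theorem prod_qp {ι : Type*} (τ : ℂ) (s : Finset ι) (f : ι → ℂ) :
    ∏ i ∈ s, qp τ (f i) = qp τ (∑ i ∈ s, f i) := by
  simp only [qp, Finset.mul_sum, Finset.sum_mul, Complex.exp_sum]

theorem qp_add (τ s t : ℂ) : qp τ (s + t) = qp τ s * qp τ t := by
  rw [qp, qp, qp, ← Complex.exp_add]
  ring_nf

theorem Fin.sum_univ_val_cast (n : ℕ) : ∑ a : Fin n, ((a : ℕ) : ℂ) = n * (n - 1) / 2 := by
  rw [Fin.sum_univ_eq_sum_range (fun i => (i : ℂ))]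
  induction n with
  | zero => simp
  | succ n ih =>
    rw [Finset.sum_range_succ, ih]
    push_cast
    ring

theorem det_of_mul_qp_sub_sub (τ c s : ℂ) (n : ℕ) (B : Matrix (Fin n) (Fin n) ℂ) :
    Matrix.det (Matrix.of fun a b : Fin n => c * qp τ (s - (a : ℕ) - (b : ℕ)) * B a b)
      = c ^ n * qp τ (n * (s - n + 1)) * B.det := by
  have hsplit : (Matrix.of fun a b : Fin n => c * qp τ (s - (a : ℕ) - (b : ℕ)) * B a b)
      = Matrix.of fun a b : Fin n => (c * qp τ s * qp τ (-(a : ℕ)))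
          * Matrix.of (fun a b : Fin n => qp τ (-(b : ℕ)) * B a b) a b := by
    ext a b
    simp only [Matrix.of_apply, sub_eq_add_neg, qp_add]
    ring
  have hexp : qp τ s ^ n * qp τ (-(n * (n - 1) / 2)) * qp τ (-(n * (n - 1) / 2))
      = qp τ (n * (s - n + 1)) := by
    simp only [qp, ← Complex.exp_nat_mul, ← Complex.exp_add]
    ring_nf
  rw [hsplit, Matrix.det_mul_column, Matrix.det_mul_row, Finset.prod_mul_distrib,
    Finset.prod_mul_distrib, Finset.prod_const, Finset.prod_const, Finset.card_univ,
    Fintype.card_fin, prod_qp, Finset.sum_neg_distrib, Fin.sum_univ_val_cast]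
  linear_combination c ^ n * B.det * hexp

theorem xi_natCast_sub_one (τ u v m k : ℂ) (n : ℕ) :
    xi τ u v m ((n : ℤ) - 1) k
      = Matrix.det (Matrix.of fun a b : Fin n => mu τ (u + v + k * τ) v (m - (a : ℕ) - (b : ℕ))) := by
  cases n with
  | zero => simp [xi]
  | succ n =>
    rw [show ((n + 1 : ℕ) : ℤ) - 1 = n by push_cast; ring, xi, if_pos (Int.natCast_nonneg n)]
    simp only [Int.toNat_natCast]

theorem xi_shifted_det (τ u v m : ℂ) (hτ : 0 < τ.im) (hgen : MuGeneric τ u v m 0)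
    (n : ℕ) (ε : ℤ) (hε : ε = 1 ∨ ε = -1) :
    xi τ u v (m - 1) ((n : ℤ) - 1) (ε : ℂ) =
      Complex.exp ((Real.pi : ℂ) * Complex.I * u) ^ (ε * (n : ℤ)) * qp τ ((n : ℂ) * (m - (n : ℂ))) *
        Matrix.det (Matrix.of fun i j : Fin (n + 1) =>
          if (i : ℕ) = 0 then Complex.exp ((Real.pi : ℂ) * Complex.I * u) ^ (ε * ((j : ℕ) : ℤ))
          else mu τ (u + v) v (m - ((i : ℕ) : ℂ) - ((j : ℕ) : ℂ))) := by
  set y := cexp ((Real.pi : ℂ) * I * u) ^ ε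
  set ν : ℕ → ℂ := fun t => mu τ (u + v) v (m - t)
  have hborder : (Matrix.of fun i j : Fin (n + 1) =>
        if (i : ℕ) = 0 then cexp ((Real.pi : ℂ) * I * u) ^ (ε * ((j : ℕ) : ℤ))
        else mu τ (u + v) v (m - ((i : ℕ) : ℂ) - ((j : ℕ) : ℂ)))
      = Matrix.of fun i j : Fin (n + 1) => if (i : ℕ) = 0 then y ^ (j : ℕ) else ν (i + j) := by
    ext i j
    simp only [Matrix.of_apply, zpow_mul, zpow_natCast, ν, Nat.cast_add, sub_sub, y]
  have hentry : ∀ a b : Fin n, mu τ (u + v + ε * τ) v (m - 1 - (a : ℕ) - (b : ℕ))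
      = y * qp τ (m - 1 - (a : ℕ) - (b : ℕ)) * (ν (a + b + 2) - y * ν (a + b + 1)) := by
    intro a b
    have h := mu_add_sign_mul_tau hτ hgen ((a + b + 1 : ℕ) : ℤ) ε hε
    simp only [Int.cast_natCast] at h
    simp only [ν]
    rw [show m - 1 - (a : ℕ) - (b : ℕ) = m - ((a + b + 1 : ℕ) : ℂ) by push_cast; ring,
      show m - ((a + b + 2 : ℕ) : ℂ) = m - ((a + b + 1 : ℕ) : ℂ) - 1 by push_cast; ring]
    exact h
  rw [xi_natCast_sub_one, hborder, Matrix.det_pow_row_zero_hankel, zpow_mul, zpow_natCast,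
    show (n : ℂ) * (m - n) = n * (m - 1 - n + 1) by ring, ← det_of_mul_qp_sub_sub]
  exact congrArg Matrix.det (Matrix.ext fun a b => hentry a b)

end
end

section
/- Suppose ξ̃ satisfies the bilinear system, and let T(f₁) := ξ̃_{0,0,2}ξ̃_{0,1,1}/(ξ̃_{0,0,1}ξ̃_{0,1,2}) (the value of f₁ with all third indices shifted by +1). Then f₁·T(f₁)·(a₁a₂f₁f₂ + a₁f₁ + 1) = a₁a₂f₁f₂ + a₁x²q²f₁ + x²q². -/
noncomputable section

/-- The bilinear system (11)–(18) for a nowhere-vanishing `ξ̃ : ℤ³ → ℂ`. -/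
def BilinearSystem (q a1 a2 x : ℂ) (ξ : ℤ → ℤ → ℤ → ℂ) : Prop :=
  ∀ a b c : ℤ,
    (q ^ (a - b - c) / (a1 * a2) * ξ (a+1) (b+1) c * ξ a b (c+1) -
        x ^ 2 * q ^ c * ξ (a+1) (b+1) (c+1) * ξ a b c +
        a2 * x * q ^ b * ξ (a+1) b c * ξ a (b+1) (c+1) = 0) ∧
    (x ^ 2 * q ^ (a - b + 2*c) / (a1 * a2) * ξ (a+1) (b+1) c * ξ a b (c-1) -
        ξ (a+1) (b+1) (c-1) * ξ a b c +
        a2 * x * q ^ (b + c) * ξ (a+1) b c * ξ a (b+1) (c-1) = 0) ∧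
    (a1 * a2 * x * q ^ (b + c) * ξ (a+1) (b+2) c * ξ a b (c-1) -
        q ^ a * ξ (a+1) (b+1) (c-1) * ξ a (b+1) c +
        q ^ (a - b) / a2 * ξ (a+1) (b+1) c * ξ a (b+1) (c-1) = 0) ∧
    (a1 * a2 * q ^ (b - c) * ξ (a+1) (b+2) c * ξ a b (c+1) -
        x * q ^ a * ξ (a+1) (b+1) (c+1) * ξ a (b+1) c +
        x * q ^ (a - b) / a2 * ξ (a+1) (b+1) c * ξ a (b+1) (c+1) = 0) ∧
    (q ^ (a - c) * ξ (a+2) (b+1) c * ξ a b (c+1) -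
        a1 * x ^ 2 * q ^ c * ξ (a+2) (b+1) (c+1) * ξ a b c +
        a1 * a2 * x * q ^ b * ξ (a+1) (b+1) (c+1) * ξ (a+1) b c = 0) ∧
    (x ^ 2 * q ^ (a + c) * ξ (a+2) (b+1) c * ξ a b (c-1) -
        a1 * q ^ (-c) * ξ (a+2) (b+1) (c-1) * ξ a b c +
        a1 * a2 * x * q ^ b * ξ (a+1) (b+1) (c-1) * ξ (a+1) b c = 0) ∧
    (a1 * a2 * x * ξ a b c * ξ (a+1) (b+2) c -
        q ^ (2*a - 2*b - c) / (a1 * a2) * ξ (a+1) (b+1) c * ξ a (b+1) c +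
        q ^ (2*a - b - c) / a1 * ξ a (b+1) (c+1) * ξ (a+1) (b+1) (c-1) = 0) ∧
    (a1 * a2 * ξ a b c * ξ (a+1) (b+2) c -
        x * q ^ (2*a - 2*b + c) / (a1 * a2) * ξ (a+1) (b+1) c * ξ a (b+1) c +
        x * q ^ (2*a + 2*b + c) / a1 * ξ a (b+1) (c-1) * ξ (a+1) (b+1) (c+1) = 0)

/-!
All relations are used at `(a, b, c) = (0, 0, 1)`. By (iii) and (vii) the factor
`a₁a₂f₁f₂ + a₁f₁ + 1` collapses to `a₂ ξ̃₀₁₂ ξ̃₁₁₀ / (ξ̃₀₁₁ ξ̃₁₁₁)`, which turns the claim into the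
cubic relation `a₂ ξ̃₁₁₀ (ξ̃₀₁₀ ξ̃₀₀₂ + a₁ ξ̃₀₀₁ ξ̃₀₁₁) = x²q² ξ̃₁₁₁ (a₁ ξ̃₀₀₁ ξ̃₀₁₀ + ξ̃₀₀₀ ξ̃₀₁₁)`.
Multiplied by `a₁a₂² x q ξ̃₁₂₁`, both sides become `x²q² a₂ ξ̃₁₁₀ ξ̃₁₁₁ (ξ̃₀₁₁² - ξ̃₀₁₀ ξ̃₀₁₂)`:
the left one after eliminating `ξ̃₁₁₂` between (iv) and (viii), the right one by (iii) and (vii).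
-/

namespace BilinearSystem

variable {q a1 a2 x : ℂ} {ξ : ℤ → ℤ → ℤ → ℂ}

theorem relation_iii (h : BilinearSystem q a1 a2 x ξ) (ha2 : a2 ≠ 0) :
    a1 * a2 ^ 2 * x * q * ξ 1 2 1 * ξ 0 0 0 = a2 * ξ 1 1 0 * ξ 0 1 1 - ξ 1 1 1 * ξ 0 1 0 := by
  obtain ⟨-, -, h3, -⟩ := h 0 0 1
  norm_num at h3
  field_simp at h3
  linear_combination h3

theorem relation_vii (h : BilinearSystem q a1 a2 x ξ) (hq : q ≠ 0) (ha1 : a1 ≠ 0) (ha2 : a2 ≠ 0) :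
    a1 ^ 2 * a2 ^ 2 * x * q * ξ 0 0 1 * ξ 1 2 1 = ξ 1 1 1 * ξ 0 1 1 - a2 * ξ 0 1 2 * ξ 1 1 0 := by
  obtain ⟨-, -, -, -, -, -, h7, -⟩ := h 0 0 1
  norm_num at h7
  field_simp at h7
  linear_combination h7

theorem relation_iv_viii (h : BilinearSystem q a1 a2 x ξ) (hq : q ≠ 0) (ha1 : a1 ≠ 0)
    (ha2 : a2 ≠ 0) :
    a1 * a2 ^ 2 * ξ 1 2 1 * (ξ 0 1 0 * ξ 0 0 2 + a1 * ξ 0 0 1 * ξ 0 1 1) =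
      x * q * ξ 1 1 1 * (ξ 0 1 1 ^ 2 - ξ 0 1 0 * ξ 0 1 2) := by
  obtain ⟨-, -, -, h4, -, -, -, h8⟩ := h 0 0 1
  norm_num at h4 h8
  field_simp at h4 h8
  linear_combination ξ 0 1 0 * h4 + ξ 0 1 1 * h8

theorem relation_iii_vii (h : BilinearSystem q a1 a2 x ξ) (hq : q ≠ 0) (ha1 : a1 ≠ 0)
    (ha2 : a2 ≠ 0) :
    a1 * ξ 0 0 1 * (ξ 0 1 0 * ξ 1 1 1 - a2 * ξ 0 1 1 * ξ 1 1 0) + ξ 0 0 0 * ξ 0 1 1 * ξ 1 1 1 =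
      a2 * ξ 0 0 0 * ξ 0 1 2 * ξ 1 1 0 := by
  linear_combination a1 * ξ 0 0 1 * relation_iii h ha2 - ξ 0 0 0 * relation_vii h hq ha1 ha2

theorem cubic_relation (h : BilinearSystem q a1 a2 x ξ) (hq : q ≠ 0) (ha1 : a1 ≠ 0)
    (ha2 : a2 ≠ 0) (hx : x ≠ 0) (hξ : ξ 1 2 1 ≠ 0) :
    a2 * ξ 1 1 0 * (ξ 0 1 0 * ξ 0 0 2 + a1 * ξ 0 0 1 * ξ 0 1 1) =
      x ^ 2 * q ^ 2 * ξ 1 1 1 * (a1 * ξ 0 0 1 * ξ 0 1 0 + ξ 0 0 0 * ξ 0 1 1) := by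
  apply mul_left_cancel₀ (show a1 * a2 ^ 2 * x * q * ξ 1 2 1 ≠ 0 by simp [*])
  linear_combination a2 * x * q * ξ 1 1 0 * relation_iv_viii h hq ha1 ha2
    - x ^ 2 * q ^ 2 * ξ 1 1 1 * ξ 0 1 0 * relation_vii h hq ha1 ha2
    - x ^ 2 * q ^ 2 * ξ 1 1 1 * ξ 0 1 1 * relation_iii h ha2

end BilinearSystem

theorem painleve_T_f1 (q a1 a2 x : ℂ) (hq : q ≠ 0) (ha1 : a1 ≠ 0) (ha2 : a2 ≠ 0) (hx : x ≠ 0)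
    (ξ : ℤ → ℤ → ℤ → ℂ) (hξ : ∀ a b c : ℤ, ξ a b c ≠ 0)
    (hbil : BilinearSystem q a1 a2 x ξ) (f1 f2 : ℂ)
    (hf1 : f1 = ξ 0 0 1 * ξ 0 1 0 / (ξ 0 0 0 * ξ 0 1 1))
    (hf2 : f2 = -(ξ 0 1 1 * ξ 1 1 0) / (ξ 0 1 0 * ξ 1 1 1))
    (Tf1 : ℂ) (hTf1 : Tf1 = ξ 0 0 2 * ξ 0 1 1 / (ξ 0 0 1 * ξ 0 1 2)) :
    f1 * Tf1 * (a1 * a2 * f1 * f2 + a1 * f1 + 1) =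
      a1 * a2 * f1 * f2 + a1 * x ^ 2 * q ^ 2 * f1 + x ^ 2 * q ^ 2 := by
  have hg := hbil.relation_iii_vii hq ha1 ha2
  have hc := hbil.cubic_relation hq ha1 ha2 hx (hξ 1 2 1)
  subst hf1 hf2 hTf1
  field_simp [hξ]
  linear_combination ξ 0 1 0 * ξ 0 0 2 * hg + ξ 0 0 0 * ξ 0 1 2 * hc

end
end

section
/- Suppose ξ̃ satisfies the bilinear system, and let T(f₂) := −ξ̃_{0,1,2}ξ̃_{1,1,1}/(ξ̃_{0,1,1}ξ̃_{1,1,2}) (the value of f₂ with all third indices shifted by +1). Then f₂·T(f₂)·(a₁a₂f₁f₂ + a₁f₁ + x²q²) = x²q²·(a₁a₂f₁f₂ + a₁f₁ + 1). -/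
noncomputable section

/-!
Relation (iii) at `(a, b, c) = (0, 0, 1)` expresses `ξ̃₁₂₁ ξ̃₀₀₀` through `f₂`. Substituting it into
(vii) and (viii) at the same point (where `ξ̃₁₂₁` occurs multiplied by `ξ̃₀₀₁`, and
`ξ̃₀₀₁ / ξ̃₀₀₀` is `f₁` up to known factors) gives
`a₂ r = 1 + a₁ f₁ (a₂ f₂ + 1)` and `a₂ x² q² s = x² q² + a₁ f₁ (a₂ f₂ + 1)` for the ratios
`r = ξ̃₀₁₂ ξ̃₁₁₀ / (ξ̃₀₁₁ ξ̃₁₁₁)` and `s = ξ̃₀₁₀ ξ̃₁₁₂ / (ξ̃₀₁₁ ξ̃₁₁₁)`.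
Since `f₂ · T(f₂) = r / s`, the claim is the quotient of these two identities.
-/

namespace BilinearSystem

variable {q a1 a2 x : ℂ} {ξ : ℤ → ℤ → ℤ → ℂ}

def f₁ (ξ : ℤ → ℤ → ℤ → ℂ) : ℂ := ξ 0 0 1 * ξ 0 1 0 / (ξ 0 0 0 * ξ 0 1 1)

def f₂ (ξ : ℤ → ℤ → ℤ → ℂ) : ℂ := -(ξ 0 1 1 * ξ 1 1 0) / (ξ 0 1 0 * ξ 1 1 1)

theorem iii_at_001 (h : BilinearSystem q a1 a2 x ξ) (ha2 : a2 ≠ 0) :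
    a1 * a2 ^ 2 * x * q * ξ 0 0 0 * ξ 1 2 1 = a2 * ξ 0 1 1 * ξ 1 1 0 - ξ 0 1 0 * ξ 1 1 1 := by
  have h3 := (h 0 0 1).2.2.1
  norm_num at h3
  field_simp at h3
  linear_combination h3

theorem vii_at_001 (h : BilinearSystem q a1 a2 x ξ) (hq : q ≠ 0) (ha1 : a1 ≠ 0) (ha2 : a2 ≠ 0) :
    a1 ^ 2 * a2 ^ 2 * x * q * ξ 0 0 1 * ξ 1 2 1 = ξ 0 1 1 * ξ 1 1 1 - a2 * ξ 0 1 2 * ξ 1 1 0 := by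
  have h7 := (h 0 0 1).2.2.2.2.2.2.1
  norm_num at h7
  field_simp at h7
  linear_combination h7

theorem viii_at_001 (h : BilinearSystem q a1 a2 x ξ) (ha1 : a1 ≠ 0) (ha2 : a2 ≠ 0) :
    a1 ^ 2 * a2 ^ 2 * ξ 0 0 1 * ξ 1 2 1 = x * q * (ξ 0 1 1 * ξ 1 1 1 - a2 * ξ 0 1 0 * ξ 1 1 2) := by
  have h8 := (h 0 0 1).2.2.2.2.2.2.2
  norm_num at h8
  field_simp at h8
  linear_combination h8

theorem ratio_form_vii (h : BilinearSystem q a1 a2 x ξ) (hξ : ∀ a b c : ℤ, ξ a b c ≠ 0)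
    (hq : q ≠ 0) (ha1 : a1 ≠ 0) (ha2 : a2 ≠ 0) :
    a2 * (ξ 0 1 2 * ξ 1 1 0 / (ξ 0 1 1 * ξ 1 1 1)) = 1 + a1 * f₁ ξ * (a2 * f₂ ξ + 1) := by
  simp only [f₁, f₂]
  field_simp [hξ 0 0 0, hξ 0 1 0, hξ 0 1 1, hξ 1 1 1]
  linear_combination ξ 0 0 0 * h.vii_at_001 hq ha1 ha2 - a1 * ξ 0 0 1 * h.iii_at_001 ha2

theorem ratio_form_viii (h : BilinearSystem q a1 a2 x ξ) (hξ : ∀ a b c : ℤ, ξ a b c ≠ 0)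
    (ha1 : a1 ≠ 0) (ha2 : a2 ≠ 0) :
    a2 * x ^ 2 * q ^ 2 * (ξ 0 1 0 * ξ 1 1 2 / (ξ 0 1 1 * ξ 1 1 1)) =
      x ^ 2 * q ^ 2 + a1 * f₁ ξ * (a2 * f₂ ξ + 1) := by
  simp only [f₁, f₂]
  field_simp [hξ 0 0 0, hξ 0 1 0, hξ 0 1 1, hξ 1 1 1]
  linear_combination x * q * ξ 0 0 0 * h.viii_at_001 ha1 ha2 - a1 * ξ 0 0 1 * h.iii_at_001 ha2

end BilinearSystem

open BilinearSystem in
theorem painleve_T_f2_general (q a1 a2 x : ℂ) (hq : q ≠ 0) (ha1 : a1 ≠ 0) (ha2 : a2 ≠ 0)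
    (ξ : ℤ → ℤ → ℤ → ℂ) (hξ : ∀ a b c : ℤ, ξ a b c ≠ 0)
    (hbil : BilinearSystem q a1 a2 x ξ) (f1 f2 : ℂ)
    (hf1 : f1 = ξ 0 0 1 * ξ 0 1 0 / (ξ 0 0 0 * ξ 0 1 1))
    (hf2 : f2 = -(ξ 0 1 1 * ξ 1 1 0) / (ξ 0 1 0 * ξ 1 1 1))
    (Tf2 : ℂ) (hTf2 : Tf2 = -(ξ 0 1 2 * ξ 1 1 1) / (ξ 0 1 1 * ξ 1 1 2)) :
    f2 * Tf2 * (a1 * a2 * f1 * f2 + a1 * f1 + x ^ 2 * q ^ 2) =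
      x ^ 2 * q ^ 2 * (a1 * a2 * f1 * f2 + a1 * f1 + 1) := by
  obtain rfl : f1 = f₁ ξ := hf1
  obtain rfl : f2 = f₂ ξ := hf2
  have hr := hbil.ratio_form_vii hξ hq ha1 ha2
  have hs := hbil.ratio_form_viii hξ ha1 ha2
  set r := ξ 0 1 2 * ξ 1 1 0 / (ξ 0 1 1 * ξ 1 1 1)
  set s := ξ 0 1 0 * ξ 1 1 2 / (ξ 0 1 1 * ξ 1 1 1)
  have hs0 : s ≠ 0 := by simp [s, hξ]
  have hT : f₂ ξ * Tf2 = r / s := by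
    simp only [hTf2, f₂, r, s]
    field_simp [hξ]
  calc f₂ ξ * Tf2 * (a1 * a2 * f₁ ξ * f₂ ξ + a1 * f₁ ξ + x ^ 2 * q ^ 2)
      = r / s * (a2 * x ^ 2 * q ^ 2 * s) := by rw [hT, hs]; ring
    _ = x ^ 2 * q ^ 2 * (a2 * r) := by field_simp
    _ = x ^ 2 * q ^ 2 * (a1 * a2 * f₁ ξ * f₂ ξ + a1 * f₁ ξ + 1) := by rw [hr]; ring

theorem painleve_T_f2 (q a1 a2 x : ℂ) (hq : q ≠ 0) (ha1 : a1 ≠ 0) (ha2 : a2 ≠ 0) (hx : x ≠ 0)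
    (ξ : ℤ → ℤ → ℤ → ℂ) (hξ : ∀ a b c : ℤ, ξ a b c ≠ 0)
    (hbil : BilinearSystem q a1 a2 x ξ) (f1 f2 : ℂ)
    (hf1 : f1 = ξ 0 0 1 * ξ 0 1 0 / (ξ 0 0 0 * ξ 0 1 1))
    (hf2 : f2 = -(ξ 0 1 1 * ξ 1 1 0) / (ξ 0 1 0 * ξ 1 1 1))
    (Tf2 : ℂ) (hTf2 : Tf2 = -(ξ 0 1 2 * ξ 1 1 1) / (ξ 0 1 1 * ξ 1 1 2)) :
    f2 * Tf2 * (a1 * a2 * f1 * f2 + a1 * f1 + x ^ 2 * q ^ 2) =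
      x ^ 2 * q ^ 2 * (a1 * a2 * f1 * f2 + a1 * f1 + 1) :=
  painleve_T_f2_general q a1 a2 x hq ha1 ha2 ξ hξ hbil f1 f2 hf1 hf2 Tf2 hTf2

end
end

section
/- Suppose ξ̃ satisfies the bilinear system, and let T₁⁻¹(f₁) := ξ̃_{1,0,1}ξ̃_{1,1,0}/(ξ̃_{1,0,0}ξ̃_{1,1,1}) (the value of f₁ with all first indices shifted by +1). Then q·T₁⁻¹(f₁)·(f₁f₂ + a₁a₂x²) = f₂·(a₁a₂f₁f₂ + x²q²). -/
/-!
The identity follows from relation (i) at `(0,0,0)` and relation (ii) at `(0,0,1)`.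
Write `A = ξ₁₁₀ξ₀₀₁`, `B = ξ₁₁₁ξ₀₀₀`, `C = ξ₁₀₀ξ₀₁₁`, `D = ξ₁₀₁ξ₀₁₀`. Then `f₁f₂ = -A/B` and
`T₁⁻¹(f₁) = -(D/C) f₂`, while the two relations read `a₁a₂x²B - A = a₁a₂²x C` and `a₁a₂A - x²q²B = a₁a₂²xq D`.
Multiplying the claimed identity by `B/f₂`, both sides become `-a₁a₂²xq D`.
-/

noncomputable section

namespace BilinearSystem

variable {q a1 a2 x : ℂ} {ξ : ℤ → ℤ → ℤ → ℂ}

theorem relation_i_000 (h : BilinearSystem q a1 a2 x ξ) (ha1 : a1 ≠ 0) (ha2 : a2 ≠ 0) :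
    ξ 1 1 0 * ξ 0 0 1 - a1 * a2 * x ^ 2 * (ξ 1 1 1 * ξ 0 0 0) +
      a1 * a2 * a2 * x * (ξ 1 0 0 * ξ 0 1 1) = 0 := by
  have hi := (h 0 0 0).1
  simp only [sub_self, zpow_ofNat, pow_zero, one_div, mul_inv_rev, zero_add, mul_one] at hi
  field_simp at hi
  linear_combination hi

theorem relation_ii_001 (h : BilinearSystem q a1 a2 x ξ) (ha1 : a1 ≠ 0) (ha2 : a2 ≠ 0) :
    x ^ 2 * q ^ 2 * (ξ 1 1 1 * ξ 0 0 0) - a1 * a2 * (ξ 1 1 0 * ξ 0 0 1) +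
      a1 * a2 * a2 * x * q * (ξ 1 0 1 * ξ 0 1 0) = 0 := by
  have hii := (h 0 0 1).2.1
  simp only [sub_self, mul_one, zero_add, zpow_ofNat, pow_one] at hii
  field_simp at hii
  linear_combination hii

end BilinearSystem

theorem T1inv_f1_identity_of_relations {K : Type*} [Field K] {q k a2 x A B C D f1 f2 T : K}
    (hB : B ≠ 0) (hC : C ≠ 0)
    (hi : A - k * x ^ 2 * B + k * a2 * x * C = 0)
    (hii : x ^ 2 * q ^ 2 * B - k * A + k * a2 * x * q * D = 0)
    (hf : f1 * f2 = -(A / B)) (hT : T = -(D / C) * f2) :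
    q * T * (f1 * f2 + k * x ^ 2) = f2 * (k * f1 * f2 + x ^ 2 * q ^ 2) := by
  rw [hT, mul_assoc k, hf]
  field_simp
  linear_combination q * D * f2 * hi - C * f2 * hii

theorem painleve_T1inv_f1_general (q a1 a2 x : ℂ) (ha1 : a1 ≠ 0) (ha2 : a2 ≠ 0)
    (ξ : ℤ → ℤ → ℤ → ℂ) (hξ : ∀ a b c : ℤ, ξ a b c ≠ 0)
    (hbil : BilinearSystem q a1 a2 x ξ) (f1 f2 : ℂ)
    (hf1 : f1 = ξ 0 0 1 * ξ 0 1 0 / (ξ 0 0 0 * ξ 0 1 1))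
    (hf2 : f2 = -(ξ 0 1 1 * ξ 1 1 0) / (ξ 0 1 0 * ξ 1 1 1))
    (T1f1 : ℂ) (hT1f1 : T1f1 = ξ 1 0 1 * ξ 1 1 0 / (ξ 1 0 0 * ξ 1 1 1)) :
    q * T1f1 * (f1 * f2 + a1 * a2 * x ^ 2) = f2 * (a1 * a2 * f1 * f2 + x ^ 2 * q ^ 2) := by
  refine T1inv_f1_identity_of_relations (mul_ne_zero (hξ 1 1 1) (hξ 0 0 0))
    (mul_ne_zero (hξ 1 0 0) (hξ 0 1 1)) (hbil.relation_i_000 ha1 ha2)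
    (hbil.relation_ii_001 ha1 ha2) ?_ ?_
  · rw [hf1, hf2]
    field_simp [hξ]
  · rw [hT1f1, hf2]
    field_simp [hξ]

theorem painleve_T1inv_f1 (q a1 a2 x : ℂ) (hq : q ≠ 0) (ha1 : a1 ≠ 0) (ha2 : a2 ≠ 0) (hx : x ≠ 0)
    (ξ : ℤ → ℤ → ℤ → ℂ) (hξ : ∀ a b c : ℤ, ξ a b c ≠ 0)
    (hbil : BilinearSystem q a1 a2 x ξ) (f1 f2 : ℂ)
    (hf1 : f1 = ξ 0 0 1 * ξ 0 1 0 / (ξ 0 0 0 * ξ 0 1 1))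
    (hf2 : f2 = -(ξ 0 1 1 * ξ 1 1 0) / (ξ 0 1 0 * ξ 1 1 1))
    (T1f1 : ℂ) (hT1f1 : T1f1 = ξ 1 0 1 * ξ 1 1 0 / (ξ 1 0 0 * ξ 1 1 1)) :
    q * T1f1 * (f1 * f2 + a1 * a2 * x ^ 2) = f2 * (a1 * a2 * f1 * f2 + x ^ 2 * q ^ 2) :=
  painleve_T1inv_f1_general q a1 a2 x ha1 ha2 ξ hξ hbil f1 f2 hf1 hf2 T1f1 hT1f1

end
end

section
/- Suppose ξ̃ satisfies the bilinear system, and let T₁⁻¹(f₂) := −ξ̃_{1,1,1}ξ̃_{2,1,0}/(ξ̃_{1,1,0}ξ̃_{2,1,1}) (the value of f₂ with all first indices shifted by +1). Then f₁f₂·T₁⁻¹(f₂)·(a₁a₂f₁f₂² + a₁f₁f₂ + x²q²f₂ + a₁²a₂x²) = x²·(a₁²a₂f₁f₂² + q²f₁f₂ + a₁x²q²f₂ + a₁a₂x²q²). -/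
noncomputable section

theorem painleve_T1inv_f2 (q a1 a2 x : ℂ) (hq : q ≠ 0) (ha1 : a1 ≠ 0) (ha2 : a2 ≠ 0) (hx : x ≠ 0)
    (ξ : ℤ → ℤ → ℤ → ℂ) (hξ : ∀ a b c : ℤ, ξ a b c ≠ 0)
    (hbil : BilinearSystem q a1 a2 x ξ) (f1 f2 : ℂ)
    (hf1 : f1 = ξ 0 0 1 * ξ 0 1 0 / (ξ 0 0 0 * ξ 0 1 1))
    (hf2 : f2 = -(ξ 0 1 1 * ξ 1 1 0) / (ξ 0 1 0 * ξ 1 1 1))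
    (T1f2 : ℂ) (hT1f2 : T1f2 = -(ξ 1 1 1 * ξ 2 1 0) / (ξ 1 1 0 * ξ 2 1 1)) :
    f1 * f2 * T1f2 * (a1 * a2 * f1 * f2 ^ 2 + a1 * f1 * f2 + x ^ 2 * q ^ 2 * f2 + a1 ^ 2 * a2 * x ^ 2) =
      x ^ 2 * (a1 ^ 2 * a2 * f1 * f2 ^ 2 + q ^ 2 * f1 * f2 + a1 * x ^ 2 * q ^ 2 * f2 +
        a1 * a2 * x ^ 2 * q ^ 2) := by
  have h1 := (hbil 0 0 0).1
  have h2 := (hbil 0 0 1).2.1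
  have h5 := (hbil 0 0 0).2.2.2.2.1
  have h6 := (hbil 0 0 1).2.2.2.2.2.1
  norm_num [zpow_ofNat] at h1 h2 h5 h6
  have h1' : ξ 1 1 0 * ξ 0 0 1 - a1*a2*x^2*ξ 1 1 1*ξ 0 0 0 + a1*a2^2*x*ξ 1 0 0*ξ 0 1 1 = 0 := by
    field_simp at h1; linear_combination h1
  have h2' : x^2*q^2*ξ 1 1 1*ξ 0 0 0 - a1*a2*ξ 1 1 0*ξ 0 0 1 + a1*a2^2*x*q*ξ 1 0 1*ξ 0 1 0 = 0 := by
    field_simp at h2; linear_combination h2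
  have h6' : x^2*q^2*ξ 2 1 1*ξ 0 0 0 - a1*ξ 2 1 0*ξ 0 0 1 + a1*a2*x*q*ξ 1 1 0*ξ 1 0 1 = 0 := by
    field_simp at h6; linear_combination h6
  set A := ξ 0 0 1; set B := ξ 0 1 0; set C := ξ 0 0 0; set D := ξ 0 1 1
  set E := ξ 1 1 0; set Fv := ξ 1 1 1; set G := ξ 2 1 0; set H := ξ 2 1 1
  have key : A*G*(a1*a2*A*D*E^2 - a1*A*B*E*Fv - x^2*q^2*C*D*E*Fv + a1^2*a2*x^2*B*C*Fv^2) =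
      x^2*C*H*(a1^2*a2*A*D*E^2 - q^2*A*B*E*Fv - a1*x^2*q^2*C*D*E*Fv + a1*a2*x^2*q^2*B*C*Fv^2) := by
    linear_combination (a2*B*D*(a1*(A*G) - x^2*q^2*(C*H)))*h5 +
      (-(B*Fv*(a1*(A*G) - x^2*q^2*(C*H))))*h1' +
      (a2*B*D*((A*G) - a1*x^2*(C*H)))*h6' +
      (-(D*E*((A*G) - a1*x^2*(C*H))))*h2'
  have hA : A ≠ 0 := hξ _ _ _
  have hB : B ≠ 0 := hξ _ _ _
  have hC : C ≠ 0 := hξ _ _ _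
  have hD : D ≠ 0 := hξ _ _ _
  have hE : E ≠ 0 := hξ _ _ _
  have hF : Fv ≠ 0 := hξ _ _ _
  have hG : G ≠ 0 := hξ _ _ _
  have hH : H ≠ 0 := hξ _ _ _
  have hp1 : f1 * (C * D) = A * B := by
    rw [hf1]; field_simp
  have hp2 : f2 * (B * Fv) = -(D * E) := by
    rw [hf2]; field_simp
  have hp3 : T1f2 * (E * H) = -(Fv * G) := by
    rw [hT1f2]; field_simp
  apply mul_left_cancel₀ (show (C*D)^2*(B*Fv)^3*(E*H) ≠ 0 by
    simp [hB, hC, hD, hE, hF, hH])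
  linear_combination (a1 * B^3 * C * D * E * Fv^3 * H * f1 * f2^2 * T1f2 + a1 * A * B^4 * E * Fv^3 * H * f2^2 * T1f2 + a1 * a2 * B^3 * C * D * E * Fv^3 * H * f1 * f2^3 * T1f2 + a1 * a2 * A * B^4 * E * Fv^3 * H * f2^3 * T1f2 + a1^2 * a2 * x^2 * B^3 * C * D * E * Fv^3 * H * f2 * T1f2 - 1 * a1^2 * a2 * x^2 * B^3 * C * D * E * Fv^3 * H * f2^2 - 1 * q^2 * x^2 * B^3 * C * D * E * Fv^3 * H * f2 + q^2 * x^2 * B^3 * C * D * E * Fv^3 * H * f2^2 * T1f2) * hp1 + (-1 * a1 * A^2 * B^3 * D * E^2 * Fv * H * T1f2 + a1 * A^2 * B^4 * E * Fv^2 * H * f2 * T1f2 + a1 * a2 * A^2 * B^2 * D^2 * E^3 * H * T1f2 - 1 * a1 * a2 * A^2 * B^3 * D * E^2 * Fv * H * f2 * T1f2 + a1 * a2 * A^2 * B^4 * E * Fv^2 * H * f2^2 * T1f2 + a1^2 * a2 * x^2 * A * B^2 * C * D^2 * E^2 * Fv * H + a1^2 * a2 * x^2 * A * B^3 * C * D *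 E * Fv^2 * H * T1f2 - 1 * a1^2 * a2 * x^2 * A * B^3 * C * D * E * Fv^2 * H * f2 - 1 * q^2 * x^2 * A * B^2 * C * D^2 * E^2 * Fv * H * T1f2 - 1 * q^2 * x^2 * A * B^3 * C * D * E * Fv^2 * H + q^2 * x^2 * A * B^3 * C * D * E * Fv^2 * H * f2 * T1f2 - 1 * q^2 * a1 * x^4 * B^2 * C^2 * D^2 * E * Fv^2 * H) * hp2 + (a1 * A^2 * B^3 * D^2 * E^2 * Fv - 1 * a1 * a2 * A^2 * B^2 * D^3 * E^3 - 1 * a1^2 * a2 * x^2 * A * B^3 * C * D^2 * E * Fv^2 + q^2 * x^2 * A * B^2 * C * D^3 * E^2 * Fv) * hp3 + (B^2*D^2*E*Fv) * key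

end
end

section
/- Suppose ξ̃ satisfies the bilinear system, and let T₂⁻¹(f₁) := ξ̃_{0,−1,1}ξ̃_{0,0,0}/(ξ̃_{0,−1,0}ξ̃_{0,0,1}) (the value of f₁ with all second indices shifted by −1). Then f₁f₂·T₂⁻¹(f₁)·(a₂f₁²f₂ + a₁a₂f₁f₂ + a₁a₂²x²f₁ + x²q²) = x²·(q²f₁²f₂ + a₁a₂²f₁f₂ + a₁a₂x²q²f₁ + a₂x²q²). -/
noncomputable section

set_option maxHeartbeats 2000000 in
theorem painleve_T2inv_f1 (q a1 a2 x : ℂ) (hq : q ≠ 0) (ha1 : a1 ≠ 0) (ha2 : a2 ≠ 0) (hx : x ≠ 0)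
    (ξ : ℤ → ℤ → ℤ → ℂ) (hξ : ∀ a b c : ℤ, ξ a b c ≠ 0)
    (hbil : BilinearSystem q a1 a2 x ξ) (f1 f2 : ℂ)
    (hf1 : f1 = ξ 0 0 1 * ξ 0 1 0 / (ξ 0 0 0 * ξ 0 1 1))
    (hf2 : f2 = -(ξ 0 1 1 * ξ 1 1 0) / (ξ 0 1 0 * ξ 1 1 1))
    (T2f1 : ℂ) (hT2f1 : T2f1 = ξ 0 (-1) 1 * ξ 0 0 0 / (ξ 0 (-1) 0 * ξ 0 0 1)) :
    f1 * f2 * T2f1 * (a2 * f1 ^ 2 * f2 + a1 * a2 * f1 * f2 + a1 * a2 ^ 2 * x ^ 2 * f1 + x ^ 2 * q ^ 2) =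
      x ^ 2 * (q ^ 2 * f1 ^ 2 * f2 + a1 * a2 ^ 2 * f1 * f2 + a1 * a2 * x ^ 2 * q ^ 2 * f1 +
        a2 * x ^ 2 * q ^ 2) := by
  have h1 := (hbil 0 (-1) 1).2.2.1
  have h2 := (hbil 0 (-1) 0).2.2.2.1
  have h3 := (hbil 0 0 0).1
  have h4 := (hbil 0 0 1).2.1
  norm_num [zpow_two] at h1 h2 h3 h4
  have e000 := hξ 0 0 0
  have e001 := hξ 0 0 1
  have e010 := hξ 0 1 0
  have e011 := hξ 0 1 1
  have e110 := hξ 1 1 0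
  have e111 := hξ 1 1 1
  have eP := hξ 0 (-1) 0
  have mG : a1 * a2 ^ 2 * x * (ξ 1 0 0 * ξ 0 1 1) =
      a1 * a2 * x ^ 2 * ξ 1 1 1 * ξ 0 0 0 - ξ 1 1 0 * ξ 0 0 1 := by
    field_simp at h3
    linear_combination h3
  have mH : a1 * a2 ^ 2 * x * q * (ξ 1 0 1 * ξ 0 1 0) =
      a1 * a2 * ξ 1 1 0 * ξ 0 0 1 - x ^ 2 * q ^ 2 * ξ 1 1 1 * ξ 0 0 0 := by
    field_simp at h4
    linear_combination h4
  have mP : a1 * a2 ^ 2 * x * (ξ 1 1 1 * ξ 0 (-1) 0) =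
      a2 * ξ 1 0 0 * ξ 0 0 1 - q * ξ 1 0 1 * ξ 0 0 0 := by
    field_simp at h1
    linear_combination h1
  have mQ : a1 * a2 ^ 2 * (ξ 1 1 0 * ξ 0 (-1) 1) =
      a2 * q * x * ξ 1 0 1 * ξ 0 0 0 - x * q ^ 2 * ξ 1 0 0 * ξ 0 0 1 := by
    field_simp at h2
    linear_combination h2
  have EQc : a1 ^ 2 * a2 ^ 4 * ξ 0 1 0 * ξ 0 1 1 * (ξ 1 1 0 * ξ 0 (-1) 1) =
      a2 * ξ 0 0 0 * ξ 0 1 1 * (a1 * a2 * ξ 1 1 0 * ξ 0 0 1 - x ^ 2 * q ^ 2 * ξ 1 1 1 * ξ 0 0 0)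
        - q ^ 2 * ξ 0 0 1 * ξ 0 1 0 * (a1 * a2 * x ^ 2 * ξ 1 1 1 * ξ 0 0 0 - ξ 1 1 0 * ξ 0 0 1) := by
    linear_combination (a1 * a2 ^ 2 * ξ 0 1 0 * ξ 0 1 1) * mQ + (a2 * ξ 0 0 0 * ξ 0 1 1) * mH
      - (q ^ 2 * ξ 0 0 1 * ξ 0 1 0) * mG
  have FPc : a1 ^ 2 * a2 ^ 4 * x ^ 2 * ξ 0 1 0 * ξ 0 1 1 * (ξ 1 1 1 * ξ 0 (-1) 0) =
      a2 * ξ 0 0 1 * ξ 0 1 0 * (a1 * a2 * x ^ 2 * ξ 1 1 1 * ξ 0 0 0 - ξ 1 1 0 * ξ 0 0 1)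
        - ξ 0 0 0 * ξ 0 1 1 * (a1 * a2 * ξ 1 1 0 * ξ 0 0 1 - x ^ 2 * q ^ 2 * ξ 1 1 1 * ξ 0 0 0) := by
    linear_combination (a1 * a2 ^ 2 * x * ξ 0 1 0 * ξ 0 1 1) * mP + (a2 * ξ 0 0 1 * ξ 0 1 0) * mG
      - (ξ 0 0 0 * ξ 0 1 1) * mH
  have m1 : f1 * (ξ 0 0 0 * ξ 0 1 1) = ξ 0 0 1 * ξ 0 1 0 := by
    rw [hf1]; field_simp
  have m2 : f2 * (ξ 0 1 0 * ξ 1 1 1) = -(ξ 0 1 1 * ξ 1 1 0) := by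
    rw [hf2]; field_simp
  have m3 : T2f1 * (ξ 0 (-1) 0 * ξ 0 0 1) = ξ 0 (-1) 1 * ξ 0 0 0 := by
    rw [hT2f1]; field_simp
  apply mul_left_cancel₀ (a := (ξ 0 0 0) ^ 3 * (ξ 0 1 1) ^ 3 * (ξ 0 1 0) ^ 3 * (ξ 1 1 1) ^ 3 *
    (ξ 0 (-1) 0) * (ξ 0 0 1) * a1 ^ 4 * a2 ^ 8 * x ^ 2 * (ξ 1 1 0))
  · simp [e000, e001, e010, e011, e110, e111, eP, ha1, ha2, hx]
  linear_combination
    ((a1) ^ 4 * (a2) ^ 9 * (x) ^ 2 * (f2) ^ 2 * (T2f1) * (ξ 0 0 1) ^ 3 * (ξ 0 1 0) ^ 5 * (ξ 1 1 0) * (ξ 1 1 1) ^ 3 * ((ξ 0 (-1) 0)) + (a1) ^ 4 * (a2) ^ 9 * (x) ^ 2 * (f1) * (f2) ^ 2 * (T2f1) * (ξ 0 0 0) * (ξ 0 0 1) ^ 2 * (ξ 0 1 0) ^ 4 * (ξ 0 1 1) * (ξ 1 1 0) * (ξ 1 1 1) ^ 3 * ((ξ 0 (-1) 0)) + (a1)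 ^ 4 * (a2) ^ 9 * (x) ^ 2 * (f1) ^ 2 * (f2) ^ 2 * (T2f1) * (ξ 0 0 0) ^ 2 * (ξ 0 0 1) * (ξ 0 1 0) ^ 3 * (ξ 0 1 1) ^ 2 * (ξ 1 1 0) * (ξ 1 1 1) ^ 3 * ((ξ 0 (-1) 0)) + (a1) ^ 5 * (a2) ^ 9 * (x) ^ 2 * (f2) ^ 2 * (T2f1) * (ξ 0 0 0) * (ξ 0 0 1) ^ 2 * (ξ 0 1 0) ^ 4 * (ξ 0 1 1) * (ξ 1 1 0) * (ξ 1 1 1) ^ 3 * ((ξ 0 (-1) 0)) + (a1) ^ 5 * (a2) ^ 9 * (x) ^ 2 * (f1) * (f2) ^ 2 * (T2f1) * (ξ 0 0 0) ^ 2 * (ξ 0 0 1) * (ξ 0 1 0) ^ 3 * (ξ 0 1 1) ^ 2 * (ξ 1 1 0) * (ξ 1 1 1) ^ 3 * ((ξ 0 (-1) 0)) - (a1) ^ 5 * (a2) ^ 10 * (x) ^ 4 * (f2) * (ξ 0 0 0) ^ 2 * (ξ 0 0 1) * (ξ 0 1 0) ^ 3 * (ξ 0 1 1) ^ 2 * (ξ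 1 1 0) * (ξ 1 1 1) ^ 3 * ((ξ 0 (-1) 0)) + (a1) ^ 5 * (a2) ^ 10 * (x) ^ 4 * (f2) * (T2f1) * (ξ 0 0 0) * (ξ 0 0 1) ^ 2 * (ξ 0 1 0) ^ 4 * (ξ 0 1 1) * (ξ 1 1 0) * (ξ 1 1 1) ^ 3 * ((ξ 0 (-1) 0)) + (a1) ^ 5 * (a2) ^ 10 * (x) ^ 4 * (f1) * (f2) * (T2f1) * (ξ 0 0 0) ^ 2 * (ξ 0 0 1) * (ξ 0 1 0) ^ 3 * (ξ 0 1 1) ^ 2 * (ξ 1 1 0) * (ξ 1 1 1) ^ 3 * ((ξ 0 (-1) 0)) - (q) ^ 2 * (a1) ^ 4 * (a2) ^ 8 * (x) ^ 4 * (f2) * (ξ 0 0 0) * (ξ 0 0 1) ^ 2 * (ξ 0 1 0) ^ 4 * (ξ 0 1 1) * (ξ 1 1 0) * (ξ 1 1 1) ^ 3 * ((ξ 0 (-1) 0)) + (q) ^ 2 * (a1) ^ 4 * (a2) ^ 8 * (x) ^ 4 * (f2) * (T2f1) * (ξ 0 0 0) ^ 2 * (ξ 0 0 1) * (ξ 0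 1 0) ^ 3 * (ξ 0 1 1) ^ 2 * (ξ 1 1 0) * (ξ 1 1 1) ^ 3 * ((ξ 0 (-1) 0)) - (q) ^ 2 * (a1) ^ 4 * (a2) ^ 8 * (x) ^ 4 * (f1) * (f2) * (ξ 0 0 0) ^ 2 * (ξ 0 0 1) * (ξ 0 1 0) ^ 3 * (ξ 0 1 1) ^ 2 * (ξ 1 1 0) * (ξ 1 1 1) ^ 3 * ((ξ 0 (-1) 0)) - (q) ^ 2 * (a1) ^ 5 * (a2) ^ 9 * (x) ^ 6 * (ξ 0 0 0) ^ 2 * (ξ 0 0 1) * (ξ 0 1 0) ^ 3 * (ξ 0 1 1) ^ 2 * (ξ 1 1 0) * (ξ 1 1 1) ^ 3 * ((ξ 0 (-1) 0))) * m1 +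
    (-(a1) ^ 4 * (a2) ^ 9 * (x) ^ 2 * (T2f1) * (ξ 0 0 1) ^ 4 * (ξ 0 1 0) ^ 4 * (ξ 0 1 1) * (ξ 1 1 0) ^ 2 * (ξ 1 1 1) * ((ξ 0 (-1) 0)) + (a1) ^ 4 * (a2) ^ 9 * (x) ^ 2 * (f2) * (T2f1) * (ξ 0 0 1) ^ 4 * (ξ 0 1 0) ^ 5 * (ξ 1 1 0) * (ξ 1 1 1) ^ 2 * ((ξ 0 (-1) 0)) - (a1) ^ 5 * (a2) ^ 9 * (x) ^ 2 * (T2f1) * (ξ 0 0 0) * (ξ 0 0 1) ^ 3 * (ξ 0 1 0) ^ 3 * (ξ 0 1 1) ^ 2 * (ξ 1 1 0) ^ 2 * (ξ 1 1 1) * ((ξ 0 (-1) 0)) + (a1) ^ 5 * (a2) ^ 9 * (x) ^ 2 * (f2) * (T2f1) * (ξ 0 0 0) * (ξ 0 0 1) ^ 3 * (ξ 0 1 0) ^ 4 * (ξ 0 1 1) * (ξ 1 1 0) * (ξ 1 1 1) ^ 2 * ((ξ 0 (-1) 0)) - (a1) ^ 5 * (a2) ^ 10 * (x) ^ 4 *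 (ξ 0 0 0) ^ 2 * (ξ 0 0 1) ^ 2 * (ξ 0 1 0) ^ 3 * (ξ 0 1 1) ^ 2 * (ξ 1 1 0) * (ξ 1 1 1) ^ 2 * ((ξ 0 (-1) 0)) + (a1) ^ 5 * (a2) ^ 10 * (x) ^ 4 * (T2f1) * (ξ 0 0 0) * (ξ 0 0 1) ^ 3 * (ξ 0 1 0) ^ 4 * (ξ 0 1 1) * (ξ 1 1 0) * (ξ 1 1 1) ^ 2 * ((ξ 0 (-1) 0)) - (q) ^ 2 * (a1) ^ 4 * (a2) ^ 8 * (x) ^ 4 * (ξ 0 0 0) * (ξ 0 0 1) ^ 3 * (ξ 0 1 0) ^ 4 * (ξ 0 1 1) * (ξ 1 1 0) * (ξ 1 1 1) ^ 2 * ((ξ 0 (-1) 0)) + (q) ^ 2 * (a1) ^ 4 * (a2) ^ 8 * (x) ^ 4 * (T2f1) * (ξ 0 0 0) ^ 2 * (ξ 0 0 1) ^ 2 * (ξ 0 1 0) ^ 3 * (ξ 0 1 1) ^ 2 * (ξ 1 1 0) * (ξ 1 1 1) ^ 2 * ((ξ 0 (-1) 0))) * m2 +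
    ((a1) ^ 4 * (a2) ^ 9 * (x) ^ 2 * (ξ 0 0 1) ^ 3 * (ξ 0 1 0) ^ 4 * (ξ 0 1 1) ^ 2 * (ξ 1 1 0) ^ 3 * (ξ 1 1 1) + (a1) ^ 5 * (a2) ^ 9 * (x) ^ 2 * (ξ 0 0 0) * (ξ 0 0 1) ^ 2 * (ξ 0 1 0) ^ 3 * (ξ 0 1 1) ^ 3 * (ξ 1 1 0) ^ 3 * (ξ 1 1 1) - (a1) ^ 5 * (a2) ^ 10 * (x) ^ 4 * (ξ 0 0 0) * (ξ 0 0 1) ^ 2 * (ξ 0 1 0) ^ 4 * (ξ 0 1 1) ^ 2 * (ξ 1 1 0) ^ 2 * (ξ 1 1 1) ^ 2 - (q) ^ 2 * (a1) ^ 4 * (a2) ^ 8 * (x) ^ 4 * (ξ 0 0 0) ^ 2 * (ξ 0 0 1) * (ξ 0 1 0) ^ 3 * (ξ 0 1 1) ^ 3 * (ξ 1 1 0) ^ 2 * (ξ 1 1 1) ^ 2) * m3 +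
    ((a1) ^ 2 * (a2) ^ 5 * (x) ^ 2 * (ξ 0 0 0) * (ξ 0 0 1) ^ 3 * (ξ 0 1 0) ^ 3 * (ξ 0 1 1) * (ξ 1 1 0) ^ 2 * (ξ 1 1 1) + (a1) ^ 3 * (a2) ^ 5 * (x) ^ 2 * (ξ 0 0 0) ^ 2 * (ξ 0 0 1) ^ 2 * (ξ 0 1 0) ^ 2 * (ξ 0 1 1) ^ 2 * (ξ 1 1 0) ^ 2 * (ξ 1 1 1) - (a1) ^ 3 * (a2) ^ 6 * (x) ^ 4 * (ξ 0 0 0) ^ 2 * (ξ 0 0 1) ^ 2 * (ξ 0 1 0) ^ 3 * (ξ 0 1 1) * (ξ 1 1 0) * (ξ 1 1 1) ^ 2 - (q) ^ 2 * (a1) ^ 2 * (a2) ^ 4 * (x) ^ 4 * (ξ 0 0 0) ^ 3 * (ξ 0 0 1) * (ξ 0 1 0) ^ 2 * (ξ 0 1 1) ^ 2 * (ξ 1 1 0) * (ξ 1 1 1) ^ 2) * EQc +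
    ((a1) ^ 3 * (a2) ^ 6 * (x) ^ 2 * (ξ 0 0 0) ^ 2 * (ξ 0 0 1) ^ 2 * (ξ 0 1 0) ^ 2 * (ξ 0 1 1) ^ 2 * (ξ 1 1 0) ^ 2 * (ξ 1 1 1) + (q) ^ 2 * (a1) ^ 2 * (a2) ^ 4 * (x) ^ 2 * (ξ 0 0 0) * (ξ 0 0 1) ^ 3 * (ξ 0 1 0) ^ 3 * (ξ 0 1 1) * (ξ 1 1 0) ^ 2 * (ξ 1 1 1) - (q) ^ 2 * (a1) ^ 2 * (a2) ^ 5 * (x) ^ 4 * (ξ 0 0 0) ^ 3 * (ξ 0 0 1) * (ξ 0 1 0) ^ 2 * (ξ 0 1 1) ^ 2 * (ξ 1 1 0) * (ξ 1 1 1) ^ 2 - (q) ^ 2 * (a1) ^ 3 * (a2) ^ 5 * (x) ^ 4 * (ξ 0 0 0) ^ 2 * (ξ 0 0 1) ^ 2 * (ξ 0 1 0) ^ 3 * (ξ 0 1 1) * (ξ 1 1 0) * (ξ 1 1 1) ^ 2) * FPc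

end
end

section
/- Suppose ξ̃ satisfies the bilinear system, and let T₂⁻¹(f₂) := −ξ̃_{0,0,1}ξ̃_{1,0,0}/(ξ̃_{0,0,0}ξ̃_{1,0,1}) (the value of f₂ with all second indices shifted by −1). Then T₂⁻¹(f₂)·(a₁a₂f₁f₂ + x²q²) = q·f₁·(f₁f₂ + a₁a₂x²). -/
noncomputable section

/-!
Write `P = ξ₀₀₁ξ₁₁₀`, `Q = ξ₀₀₀ξ₁₁₁`, `u = ξ₁₀₀ξ₀₁₁`, `v = ξ₁₀₁ξ₀₁₀`, so that `f₁f₂ = -P/Q` and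
`T₂⁻¹(f₂) = -f₁ u / v`. Relation (i) at the origin and relation (ii) at `(0,0,1)` are linear in
`P` and `Q` and express the two factors of the claim through `u` and `v`:
`f₁f₂ + a₁a₂x² = a₁a₂²x u/Q` and `a₁a₂f₁f₂ + x²q² = -a₁a₂²xq v/Q`.
Multiplying the second by `T₂⁻¹(f₂)` turns `v` into `u` and gives `q f₁` times the first.
-/

namespace BilinearSystem

variable {q a1 a2 x : ℂ} {ξ : ℤ → ℤ → ℤ → ℂ}

theorem relation_i_at_000 (h : BilinearSystem q a1 a2 x ξ) (ha1 : a1 ≠ 0) (ha2 : a2 ≠ 0) :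
    ξ 0 0 1 * ξ 1 1 0 - a1 * a2 * x ^ 2 * ξ 0 0 0 * ξ 1 1 1
      + a1 * a2 ^ 2 * x * ξ 1 0 0 * ξ 0 1 1 = 0 := by
  have hi := (h 0 0 0).1
  norm_num at hi
  field_simp at hi
  linear_combination hi

theorem relation_ii_at_001 (h : BilinearSystem q a1 a2 x ξ) (ha1 : a1 ≠ 0) (ha2 : a2 ≠ 0) :
    x ^ 2 * q ^ 2 * ξ 0 0 0 * ξ 1 1 1 - a1 * a2 * ξ 0 0 1 * ξ 1 1 0
      + a1 * a2 ^ 2 * x * q * ξ 1 0 1 * ξ 0 1 0 = 0 := by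
  have hii := (h 0 0 1).2.1
  norm_num [zpow_two] at hii
  field_simp at hii
  linear_combination hii

end BilinearSystem

theorem painleve_T2inv_f2_general (q a1 a2 x : ℂ) (ha1 : a1 ≠ 0) (ha2 : a2 ≠ 0)
    (ξ : ℤ → ℤ → ℤ → ℂ) (hξ : ∀ a b c : ℤ, ξ a b c ≠ 0)
    (hbil : BilinearSystem q a1 a2 x ξ) (f1 f2 : ℂ)
    (hf1 : f1 = ξ 0 0 1 * ξ 0 1 0 / (ξ 0 0 0 * ξ 0 1 1))
    (hf2 : f2 = -(ξ 0 1 1 * ξ 1 1 0) / (ξ 0 1 0 * ξ 1 1 1))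
    (T2f2 : ℂ) (hT2f2 : T2f2 = -(ξ 0 0 1 * ξ 1 0 0) / (ξ 0 0 0 * ξ 1 0 1)) :
    T2f2 * (a1 * a2 * f1 * f2 + x ^ 2 * q ^ 2) = q * f1 * (f1 * f2 + a1 * a2 * x ^ 2) := by
  have hQ : ξ 0 0 0 * ξ 1 1 1 ≠ 0 := mul_ne_zero (hξ 0 0 0) (hξ 1 1 1)
  have hf1f2 : f1 * f2 = -(ξ 0 0 1 * ξ 1 1 0) / (ξ 0 0 0 * ξ 1 1 1) := by
    rw [hf1, hf2]
    field_simp [hξ 0 1 0, hξ 0 1 1]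
  have hT2f2v : T2f2 * (ξ 1 0 1 * ξ 0 1 0) = -f1 * (ξ 1 0 0 * ξ 0 1 1) := by
    rw [hT2f2, hf1]
    field_simp [hξ 0 0 0, hξ 1 0 1, hξ 0 1 1]
  have hfirst : f1 * f2 + a1 * a2 * x ^ 2
      = a1 * a2 ^ 2 * x * (ξ 1 0 0 * ξ 0 1 1) / (ξ 0 0 0 * ξ 1 1 1) := by
    rw [hf1f2, eq_div_iff hQ, add_mul, div_mul_cancel₀ _ hQ]
    linear_combination -hbil.relation_i_at_000 ha1 ha2
  have hsecond : a1 * a2 * f1 * f2 + x ^ 2 * q ^ 2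
      = -(a1 * a2 ^ 2 * x * q * (ξ 1 0 1 * ξ 0 1 0)) / (ξ 0 0 0 * ξ 1 1 1) := by
    rw [mul_assoc (a1 * a2), hf1f2, eq_div_iff hQ, add_mul, mul_div_assoc', div_mul_cancel₀ _ hQ]
    linear_combination hbil.relation_ii_at_001 ha1 ha2
  rw [hsecond, hfirst, mul_div_assoc', mul_div_assoc', div_left_inj' hQ]
  linear_combination (-(a1 * a2 ^ 2 * x * q)) * hT2f2v

theorem painleve_T2inv_f2 (q a1 a2 x : ℂ) (hq : q ≠ 0) (ha1 : a1 ≠ 0) (ha2 : a2 ≠ 0) (hx : x ≠ 0)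
    (ξ : ℤ → ℤ → ℤ → ℂ) (hξ : ∀ a b c : ℤ, ξ a b c ≠ 0)
    (hbil : BilinearSystem q a1 a2 x ξ) (f1 f2 : ℂ)
    (hf1 : f1 = ξ 0 0 1 * ξ 0 1 0 / (ξ 0 0 0 * ξ 0 1 1))
    (hf2 : f2 = -(ξ 0 1 1 * ξ 1 1 0) / (ξ 0 1 0 * ξ 1 1 1))
    (T2f2 : ℂ) (hT2f2 : T2f2 = -(ξ 0 0 1 * ξ 1 0 0) / (ξ 0 0 0 * ξ 1 0 1)) :
    T2f2 * (a1 * a2 * f1 * f2 + x ^ 2 * q ^ 2) = q * f1 * (f1 * f2 + a1 * a2 * x ^ 2) :=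
  painleve_T2inv_f2_general q a1 a2 x ha1 ha2 ξ hξ hbil f1 f2 hf1 hf2 T2f2 hT2f2

end
end
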